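/- arXiv:1206.6772 — 2 statements merged into one kernel-verified Lean document; each statement's English description precedes it below -/
import Mathlib

section
/- Let r ≥ 1, let G be the free group on r generators, let n be a natural number, and let K be a set. Let B = {f ∈ G : |f| ≤ n} be the ball of radius n around the identity with respect to the word metric, and let S be the set consisting of the r free generators of G together with their inverses. Suppose z : G → K^B is a map such that for every g ∈ G and every s ∈ S there exists y ∈ K^G with z(g)(f) = y(fg) for all f ∈ B and z(sg)(f) = y(fsg) for all f ∈ B. Then there exists a single y ∈ K^G such that z(g)(f) = y(fg) for all g ∈ G and all f ∈ B. (In other words, the local two-point consistency condition implies that z lies in the image of the coding map φ : K^G → (K^B)^G, φ(x)(g)(f) = x(fg).) -/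
/-!
The candidate is `y g := z g 1`. To see that `z g f = z (f g) 1`, peel the last letter `s` off
the reduced word of `f = f' s`: the consistency condition on the edge `g → s g` gives
`z g (f' s) = z (s g) f'`, and `f'` is shorter, so induction on word length finishes.
-/

namespace FreeGroup

variable {α : Type*}

def symmGenerators (α : Type*) : Set (FreeGroup α) := {s | ∃ i, s = of i ∨ s = (of i)⁻¹}

lemma mk_singleton_mem_symmGenerators (a : α × Bool) : mk [a] ∈ symmGenerators α := by
  obtain ⟨i, _ | _⟩ := a
  · exact ⟨i, Or.inr (by simp [of, inv_mk, invRev])⟩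
  · exact ⟨i, Or.inl rfl⟩

variable [DecidableEq α]

lemma exists_mul_mem_symmGenerators_of_ne_one {f : FreeGroup α} (hf : f ≠ 1) :
    ∃ f', ∃ s ∈ symmGenerators α, f' * s = f ∧ f'.norm < f.norm := by
  have hne : f.toWord ≠ [] := by simpa using hf
  refine ⟨mk f.toWord.dropLast, _, mk_singleton_mem_symmGenerators (f.toWord.getLast hne),
    ?_, ?_⟩
  · rw [mul_mk, List.dropLast_append_getLast, mk_toWord]
  · calc (mk f.toWord.dropLast).norm ≤ f.toWord.dropLast.length := norm_mk_le
      _ < f.toWord.length := by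
        rw [List.length_dropLast]; exact Nat.sub_one_lt (List.length_pos_iff.mpr hne).ne'
      _ = f.norm := rfl

def LocallyConsistent {K : Type*} {n : ℕ}
    (z : FreeGroup α → {f : FreeGroup α // f.norm ≤ n} → K) : Prop :=
  ∀ g, ∀ s ∈ symmGenerators α, ∃ y : FreeGroup α → K,
    (∀ f : {f : FreeGroup α // f.norm ≤ n}, z g f = y (f.1 * g)) ∧
    (∀ f : {f : FreeGroup α // f.norm ≤ n}, z (s * g) f = y (f.1 * (s * g)))

lemma LocallyConsistent.apply_eq_apply_one {K : Type*} {n : ℕ}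
    {z : FreeGroup α → {f : FreeGroup α // f.norm ≤ n} → K} (hz : LocallyConsistent z)
    (f : FreeGroup α) (hf : f.norm ≤ n) (g : FreeGroup α) :
    z g ⟨f, hf⟩ = z (f * g) ⟨1, by simp [norm_one]⟩ := by
  induction h : f.norm using Nat.strong_induction_on generalizing f g with
  | _ m ih =>
  rcases eq_or_ne f 1 with rfl | hf1
  · simp
  obtain ⟨f', s, hs, rfl, hlt⟩ := exists_mul_mem_symmGenerators_of_ne_one hf1
  obtain ⟨y, hy, hys⟩ := hz g s hs
  have hf' : f'.norm ≤ n := hlt.le.trans hf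
  calc z g ⟨f' * s, hf⟩ = y (f' * (s * g)) := by rw [hy, mul_assoc]
    _ = z (s * g) ⟨f', hf'⟩ := (hys ⟨f', hf'⟩).symm
    _ = z (f' * s * g) ⟨1, _⟩ := by rw [ih _ (h ▸ hlt) f' hf' _ rfl, mul_assoc]

end FreeGroup

theorem local_consistency_implies_global_coding_general
    (r : ℕ) (n : ℕ) (K : Type*)
    (S : Set (FreeGroup (Fin r)))
    (hS : S = {s | ∃ i : Fin r, s = FreeGroup.of i ∨ s = (FreeGroup.of i)⁻¹})
    (z : FreeGroup (Fin r) → {f : FreeGroup (Fin r) // f.norm ≤ n} → K)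
    (hz : ∀ g : FreeGroup (Fin r), ∀ s ∈ S, ∃ y : FreeGroup (Fin r) → K,
      (∀ f : {f : FreeGroup (Fin r) // f.norm ≤ n}, z g f = y (f.1 * g)) ∧
      (∀ f : {f : FreeGroup (Fin r) // f.norm ≤ n}, z (s * g) f = y (f.1 * (s * g)))) :
    ∃ y : FreeGroup (Fin r) → K,
      ∀ (g : FreeGroup (Fin r)) (f : {f : FreeGroup (Fin r) // f.norm ≤ n}),
        z g f = y (f.1 * g) := by
  subst hS
  have hz' : FreeGroup.LocallyConsistent z := hz
  exact ⟨fun g => z g ⟨1, by simp [FreeGroup.norm_one]⟩,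
    fun g f => hz'.apply_eq_apply_one f.1 f.2 g⟩

/-- For the free group `G` on `r ≥ 1` generators, `B` the ball of radius `n`
around the identity in the word metric, and `S` the set of the `r` free generators together
with their inverses: if `z : G → K^B` satisfies the local two-point consistency condition
(for every `g ∈ G`, `s ∈ S` there is `y ∈ K^G` with `z(g)(f) = y(fg)` and `z(sg)(f) = y(fsg)`
for all `f ∈ B`), then there is a single `y ∈ K^G` with `z(g)(f) = y(fg)` for all `g, f`;
i.e. `z` lies in the image of the coding map `φ : K^G → (K^B)^G`, `φ(x)(g)(f) = x(fg)`. -/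
theorem local_consistency_implies_global_coding
    (r : ℕ) (hr : 1 ≤ r) (n : ℕ) (K : Type*)
    (S : Set (FreeGroup (Fin r)))
    (hS : S = {s | ∃ i : Fin r, s = FreeGroup.of i ∨ s = (FreeGroup.of i)⁻¹})
    (z : FreeGroup (Fin r) → {f : FreeGroup (Fin r) // f.norm ≤ n} → K)
    (hz : ∀ g : FreeGroup (Fin r), ∀ s ∈ S, ∃ y : FreeGroup (Fin r) → K,
      (∀ f : {f : FreeGroup (Fin r) // f.norm ≤ n}, z g f = y (f.1 * g)) ∧
      (∀ f : {f : FreeGroup (Fin r) // f.norm ≤ n}, z (s * g) f = y (f.1 * (s * g)))) :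
    ∃ y : FreeGroup (Fin r) → K,
      ∀ (g : FreeGroup (Fin r)) (f : {f : FreeGroup (Fin r) // f.norm ≤ n}),
        z g f = y (f.1 * g) :=
  local_consistency_implies_global_coding_general r n K S hS z hz
end

section
/- Let r ≥ 1, let G be the free group on r generators, let n be a natural number, and let K be a set. Let B = {f ∈ G : |f| ≤ n} and let S be the set consisting of the r free generators of G together with their inverses. Suppose z : G → K^B satisfies: for every g ∈ G and every s ∈ S there exists y ∈ K^G with z(g)(f) = y(fg) for all f ∈ B and z(sg)(f) = y(fsg) for all f ∈ B. Then for every f ∈ G with |f| ≤ n one has z(f)(e) = z(e)(f), where e is the identity element of G. -/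
open FreeGroup in
private lemma reduce_tail_aux {α : Type*} [DecidableEq α] {x : α × Bool}
    {L : List (α × Bool)} (h : FreeGroup.reduce (x :: L) = x :: L) :
    FreeGroup.reduce L = L := by
  cases hL : FreeGroup.reduce L with
  | nil =>
    rw [reduce.cons, hL] at h
    simp only [] at h
    cases h
    simpa using hL
  | cons y ys =>
    have hlen : (FreeGroup.reduce L).length ≤ L.length :=
      Red.length_le reduce.red
    rw [reduce.cons, hL] at h
    simp only [] at h
    split_ifs at h with hc
    · exfalso
      have h1 : ys.length = L.length + 1 := by rw [h]; simp
      have h2 : (y :: ys).length ≤ L.length := by rw [← hL]; exact hlen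
      simp [h1] at h2
    · cases h
      rfl

open FreeGroup in
private lemma decomp_aux {α : Type*} [DecidableEq α] (b : FreeGroup α) (hb : b ≠ 1) :
    ∃ (i : α) (s c : FreeGroup α),
      (s = FreeGroup.of i ∨ s = (FreeGroup.of i)⁻¹) ∧ b = s * c ∧
      c.norm + 1 = b.norm := by
  cases hw : b.toWord with
  | nil => exact absurd (toWord_eq_nil_iff.mp hw) hb
  | cons x L =>
    have hred : FreeGroup.reduce (x :: L) = x :: L := by
      rw [← hw]; exact reduce_toWord b
    have hLred : FreeGroup.reduce L = L := reduce_tail_aux hred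
    refine ⟨x.1, FreeGroup.mk [x], FreeGroup.mk L, ?_, ?_, ?_⟩
    · rcases x with ⟨i, bb⟩
      cases bb
      · right
        rfl
      · left
        rfl
    · rw [mul_mk, List.singleton_append, ← hw, mk_toWord]
    · show (FreeGroup.mk L).toWord.length + 1 = b.toWord.length
      rw [toWord_mk, hLred, hw]
      simp

/-- With `G` the free group on `r ≥ 1` generators, `B` the ball of radius `n`
around the identity, and `S` the free generators together with their inverses: if
`z : G → K^B` satisfies the local two-point consistency condition, then for every `f ∈ G`
with `|f| ≤ n` one has `z(f)(e) = z(e)(f)`. -/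
theorem local_consistency_implies_symmetry
    (r : ℕ) (hr : 1 ≤ r) (n : ℕ) (K : Type*)
    (S : Set (FreeGroup (Fin r)))
    (hS : S = {s | ∃ i : Fin r, s = FreeGroup.of i ∨ s = (FreeGroup.of i)⁻¹})
    (z : FreeGroup (Fin r) → {f : FreeGroup (Fin r) // f.norm ≤ n} → K)
    (hz : ∀ g : FreeGroup (Fin r), ∀ s ∈ S, ∃ y : FreeGroup (Fin r) → K,
      (∀ f : {f : FreeGroup (Fin r) // f.norm ≤ n}, z g f = y (f.1 * g)) ∧
      (∀ f : {f : FreeGroup (Fin r) // f.norm ≤ n}, z (s * g) f = y (f.1 * (s * g)))) :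
    ∀ (f : FreeGroup (Fin r)) (hf : f.norm ≤ n),
      z f ⟨1, by simp⟩ = z 1 ⟨f, hf⟩ := by
  -- main claim by strong induction on the norm of b
  have main : ∀ (m : ℕ) (a b : FreeGroup (Fin r)), b.norm = m →
      (a * b).norm = a.norm + b.norm → ∀ (h : (a * b).norm ≤ n)
      (ha : a.norm ≤ n), z b ⟨a, ha⟩ = z 1 ⟨a * b, h⟩ := by
    intro m
    induction m with
    | zero =>
      intro a b hb _ h ha
      have hb1 : b = 1 := FreeGroup.norm_eq_zero.mp hb
      subst hb1
      congr 1
      exact Subtype.ext (by simp)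
    | succ m ih =>
      intro a b hbm hsum h ha
      have hb : b ≠ 1 := by
        intro h1; rw [h1, FreeGroup.norm_one] at hbm; omega
      obtain ⟨i, s, c, hsi, hbc, hcn⟩ := decomp_aux b hb
      have hsS : s ∈ S := by rw [hS]; exact ⟨i, hsi⟩
      have hsn : s.norm = 1 := by
        rcases hsi with h1 | h1 <;> rw [h1] <;>
          simp [FreeGroup.norm_inv_eq, FreeGroup.norm_of]
      have hcm : c.norm = m := by omega
      have hab : a * b = (a * s) * c := by rw [hbc, mul_assoc]
      have hle1 : (a * b).norm ≤ (a * s).norm + c.norm := by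
        rw [hab]; exact FreeGroup.norm_mul_le _ _
      have hle2 : (a * s).norm ≤ a.norm + 1 := by
        have := FreeGroup.norm_mul_le a s
        omega
      have has : (a * s).norm = a.norm + 1 := by omega
      have hasn : (a * s).norm ≤ n := by omega
      -- use hz with g = c, s = s
      obtain ⟨y, hy1, hy2⟩ := hz c s hsS
      have step1 : z b ⟨a, ha⟩ = y (a * (s * c)) := by
        rw [hbc]; exact hy2 ⟨a, ha⟩
      have step2 : z c ⟨a * s, hasn⟩ = y ((a * s) * c) := hy1 ⟨a * s, hasn⟩
      have step3 : z b ⟨a, ha⟩ = z c ⟨a * s, hasn⟩ := by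
        rw [step1, step2, mul_assoc]
      have hsum' : ((a * s) * c).norm = (a * s).norm + c.norm := by
        rw [← hab]; omega
      have h' : ((a * s) * c).norm ≤ n := by rw [← hab]; omega
      rw [step3, ih (a * s) c hcm hsum' h' hasn]
      congr 1
      exact Subtype.ext (by simp [mul_assoc, ← hbc])
  intro f hf
  have h1 : (1 * f).norm = (1 : FreeGroup (Fin r)).norm + f.norm := by simp
  have h2 : (1 * f).norm ≤ n := by simpa using hf
  have := main f.norm 1 f rfl h1 h2 (by simp)
  rw [this]
  congr 1
  exact Subtype.ext (by simp)
end
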